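/- Let A be a real N×d matrix with AᵀA positive definite with largest eigenvalue λ₁, let K* = (AᵀA)⁻¹, b ∈ ℝ^N, and x* the minimizer of x ↦ ½‖Ax−b‖². Let 0 < δ ≤ 1, x, w ∈ ℝ^d, K^o ∈ ℝ^{d×d}, and set x^o = x + w, z = x − x*, z^o = x^o − x*, K̃^o = K^o − K*. If x⁺ = x^o − δK^o Aᵀ(A x^o − b), then (i) x⁺ − x* = (I − δK^o AᵀA) z^o, and (ii) ‖x⁺ − x*‖ ≤ (1 − δ + δλ₁‖K̃^o‖)(‖z‖ + ‖w‖), where ‖·‖ denotes the Euclidean norm on vectors and the spectral norm on matrices. -/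

import Mathlib

open Matrix Filter Finset MeasureTheory ProbabilityTheory

/-- The spectral norm (operator 2-norm) of a real rectangular matrix, i.e. the operator
norm of the induced linear map between Euclidean spaces. -/
noncomputable def specNorm {m n : ℕ} (M : Matrix (Fin m) (Fin n) ℝ) : ℝ :=
  ‖LinearMap.toContinuousLinearMap (Matrix.toEuclideanLin M)‖

/-- Matrix-vector multiplication, viewed as a map between Euclidean spaces. -/
noncomputable def mulVecE {m n : ℕ} (M : Matrix (Fin m) (Fin n) ℝ)
    (v : EuclideanSpace ℝ (Fin n)) : EuclideanSpace ℝ (Fin m) :=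
  Matrix.toEuclideanLin M v

/-- The `j`-th column of a matrix, as an element of Euclidean space. -/
noncomputable def colE {m n : ℕ} (M : Matrix (Fin m) (Fin n) ℝ) (j : Fin n) :
    EuclideanSpace ℝ (Fin m) := WithLp.toLp 2 (fun i => M i j)

/-- The Frobenius norm of a matrix: square root of the sum of the squared Euclidean
norms of its columns. -/
noncomputable def frobNorm {m n : ℕ} (M : Matrix (Fin m) (Fin n) ℝ) : ℝ :=
  Real.sqrt (∑ j, ‖colE M j‖ ^ 2)

/-- The l¹-norm of a vector. -/
noncomputable def l1Norm {n : ℕ} (v : EuclideanSpace ℝ (Fin n)) : ℝ := ∑ i, |v i|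

/-!
The minimiser satisfies the normal equations `Aᵀ(Ax* - b) = 0`, so the gradient at `x^o` is
`AᵀA z^o` and `x⁺ - x* = (I - δ K^o AᵀA) z^o`. Writing `K^o = K* + K̃^o` and using `K* AᵀA = I`,
the iteration matrix becomes `(1 - δ) I - δ K̃^o AᵀA`, whose spectral norm is at most
`1 - δ + δ ‖K̃^o‖ ‖AᵀA‖`. By the spectral theorem `‖AᵀA‖ = λ₁`, and `‖z^o‖ ≤ ‖z‖ + ‖w‖`.
-/

open scoped Matrix.Norms.L2Operator

theorem LinearMap.adjoint_apply_sub_eq_zero_of_forall_norm_le {E F : Type*}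
    [NormedAddCommGroup E] [InnerProductSpace ℝ E] [FiniteDimensional ℝ E]
    [NormedAddCommGroup F] [InnerProductSpace ℝ F] [FiniteDimensional ℝ F]
    (T : E →ₗ[ℝ] F) {b : F} {x : E} (h : ∀ y, ‖T x - b‖ ≤ ‖T y - b‖) :
    T.adjoint (T x - b) = 0 := by
  have hinf : ‖b - T x‖ = ⨅ w : (LinearMap.range T : Set F), ‖b - w‖ := by
    refine le_antisymm (le_ciInf ?_) ?_
    · rintro ⟨_, y, rfl⟩
      simpa only [norm_sub_rev] using h y
    · exact ciInf_le ⟨0, Set.forall_mem_range.2 fun _ => norm_nonneg _⟩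
        (⟨T x, LinearMap.mem_range_self T x⟩ : LinearMap.range T)
  have horth :=
    (Submodule.norm_eq_iInf_iff_real_inner_eq_zero _ (LinearMap.mem_range_self T x)).1 hinf
  refine ext_inner_right ℝ fun v => ?_
  rw [LinearMap.adjoint_inner_left, inner_zero_left, ← neg_sub, inner_neg_left,
    horth _ (LinearMap.mem_range_self T v), neg_zero]

namespace Matrix

open scoped ComplexOrder

variable {𝕜 : Type*} [RCLike 𝕜] {n : Type*} [Fintype n] [DecidableEq n]

theorem IsHermitian.l2_opNorm_eq {A : Matrix n n 𝕜} (hA : A.IsHermitian) :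
    ‖A‖ = ‖hA.eigenvalues‖ := by
  conv_lhs => rw [hA.spectral_theorem]
  rw [Unitary.conjStarAlgAut_apply,
    CStarRing.norm_mul_mem_unitary _ (Unitary.star_mem (SetLike.coe_mem _)),
    CStarRing.norm_coe_unitary_mul, l2_opNorm_diagonal]
  simp [Pi.norm_def]

theorem PosSemidef.l2_opNorm_eq_of_isGreatest {A : Matrix n n 𝕜} (hA : A.PosSemidef) {lam : ℝ}
    (hlam : IsGreatest (Set.range hA.isHermitian.eigenvalues) lam) : ‖A‖ = lam := by
  obtain ⟨i, hi⟩ := hlam.1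
  rw [hA.isHermitian.l2_opNorm_eq]
  refine le_antisymm ((pi_norm_le_iff_of_nonneg (hi ▸ hA.eigenvalues_nonneg i)).2 fun j => ?_) ?_
  · rw [Real.norm_of_nonneg (hA.eigenvalues_nonneg j)]
    exact hlam.2 ⟨j, rfl⟩
  · rw [← hi, ← Real.norm_of_nonneg (hA.eigenvalues_nonneg i)]
    exact norm_le_pi_norm _ i

theorem l2_opNorm_one_le : ‖(1 : Matrix n n 𝕜)‖ ≤ 1 := by
  rw [cstar_norm_def, map_one]
  exact ContinuousLinearMap.norm_id_le

end Matrix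

theorem norm_one_sub_smul_mul_le {R : Type*} [NormedRing R] [NormedAlgebra ℝ R]
    (h1 : ‖(1 : R)‖ ≤ 1) {K K' G : R} (hK' : K' * G = 1) {δ : ℝ}
    (hδ0 : 0 ≤ δ) (hδ1 : δ ≤ 1) :
    ‖1 - δ • (K * G)‖ ≤ 1 - δ + δ * (‖K - K'‖ * ‖G‖) := by
  have hsplit : 1 - δ • (K * G) = (1 - δ) • 1 - δ • ((K - K') * G) := by
    rw [sub_mul, hK']
    module
  rw [hsplit]
  calc ‖(1 - δ) • (1 : R) - δ • ((K - K') * G)‖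
      ≤ ‖(1 - δ) • (1 : R)‖ + ‖δ • ((K - K') * G)‖ := norm_sub_le _ _
    _ ≤ (1 - δ) * 1 + δ * (‖K - K'‖ * ‖G‖) := by
      rw [norm_smul, norm_smul, Real.norm_of_nonneg (sub_nonneg.2 hδ1), Real.norm_of_nonneg hδ0]
      gcongr
      exact norm_mul_le _ _
    _ = 1 - δ + δ * (‖K - K'‖ * ‖G‖) := by ring

theorem specNorm_eq_l2_opNorm {m n : ℕ} (M : Matrix (Fin m) (Fin n) ℝ) :
    specNorm M = ‖M‖ :=
  rfl

theorem norm_mulVecE_le {m n : ℕ} (M : Matrix (Fin m) (Fin n) ℝ)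
    (v : EuclideanSpace ℝ (Fin n)) :
    ‖mulVecE M v‖ ≤ ‖M‖ * ‖v‖ :=
  (LinearMap.toContinuousLinearMap (toEuclideanLin M)).le_opNorm v

theorem mulVecE_transpose_residual_eq_zero {m n : ℕ} (A : Matrix (Fin m) (Fin n) ℝ)
    {b : EuclideanSpace ℝ (Fin m)} {xstar : EuclideanSpace ℝ (Fin n)}
    (hmin : ∀ y, ‖mulVecE A xstar - b‖ ≤ ‖mulVecE A y - b‖) :
    mulVecE Aᵀ (mulVecE A xstar - b) = 0 := by
  rw [mulVecE, ← conjTranspose_eq_transpose_of_trivial,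
    toEuclideanLin_conjTranspose_eq_adjoint]
  exact LinearMap.adjoint_apply_sub_eq_zero_of_forall_norm_le _ hmin

theorem mulVecE_transpose_residual_eq {m n : ℕ} (A : Matrix (Fin m) (Fin n) ℝ)
    {b : EuclideanSpace ℝ (Fin m)} {xstar : EuclideanSpace ℝ (Fin n)}
    (hstar : mulVecE Aᵀ (mulVecE A xstar - b) = 0) (x : EuclideanSpace ℝ (Fin n)) :
    mulVecE Aᵀ (mulVecE A x - b) = mulVecE (Aᵀ * A) (x - xstar) := by
  calc mulVecE Aᵀ (mulVecE A x - b)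
      = mulVecE Aᵀ (mulVecE A x - b) - mulVecE Aᵀ (mulVecE A xstar - b) := by
        rw [hstar, sub_zero]
    _ = mulVecE (Aᵀ * A) (x - xstar) := by
        simp only [mulVecE, map_sub, toLpLin_mul_same, LinearMap.comp_apply]
        abel

/-- one-step error analysis under process noise, proof of Theorem 2 of
the paper. (i) the error identity, and (ii) the resulting norm bound. -/
theorem ipg_process_noise_one_step {N d : ℕ}
    (A : Matrix (Fin N) (Fin d) ℝ) (hPD : (Aᵀ * A).PosDef)
    (lam1 : ℝ)
    (hlam1 : IsGreatest (Set.range hPD.isHermitian.eigenvalues) lam1)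
    (b : EuclideanSpace ℝ (Fin N)) (xstar : EuclideanSpace ℝ (Fin d))
    (hmin : ∀ y, (1 / 2) * ‖mulVecE A xstar - b‖ ^ 2 ≤ (1 / 2) * ‖mulVecE A y - b‖ ^ 2)
    (δ : ℝ) (hδ0 : 0 < δ) (hδ1 : δ ≤ 1)
    (x w : EuclideanSpace ℝ (Fin d)) (Ko : Matrix (Fin d) (Fin d) ℝ)
    (xo : EuclideanSpace ℝ (Fin d)) (hxo : xo = x + w)
    (xplus : EuclideanSpace ℝ (Fin d))
    (hxp : xplus = xo - δ • mulVecE Ko (mulVecE Aᵀ (mulVecE A xo - b))) :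
    xplus - xstar = mulVecE (1 - δ • (Ko * (Aᵀ * A))) (xo - xstar) ∧
    ‖xplus - xstar‖ ≤
      (1 - δ + δ * lam1 * specNorm (Ko - (Aᵀ * A)⁻¹)) * (‖x - xstar‖ + ‖w‖) := by
  set G := Aᵀ * A
  have hstar : mulVecE Aᵀ (mulVecE A xstar - b) = 0 :=
    mulVecE_transpose_residual_eq_zero A fun y =>
      (pow_le_pow_iff_left₀ (norm_nonneg _) (norm_nonneg _) two_ne_zero).1 (by linarith [hmin y])
  have herr : xplus - xstar = mulVecE (1 - δ • (Ko * G)) (xo - xstar) := by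
    rw [hxp, mulVecE_transpose_residual_eq A hstar]
    simp only [G, mulVecE, map_sub, map_smul, toLpLin_one, toLpLin_mul_same,
      LinearMap.sub_apply, LinearMap.smul_apply, LinearMap.id_apply, LinearMap.comp_apply]
    module
  have hG : ‖G‖ = lam1 := hPD.posSemidef.l2_opNorm_eq_of_isGreatest hlam1
  have hstep : ‖1 - δ • (Ko * G)‖ ≤ 1 - δ + δ * lam1 * specNorm (Ko - G⁻¹) := by
    rw [specNorm_eq_l2_opNorm, mul_right_comm, ← hG, mul_assoc]
    exact norm_one_sub_smul_mul_le l2_opNorm_one_le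
      (nonsing_inv_mul G hPD.det_pos.ne'.isUnit) hδ0.le hδ1
  have hz : ‖xo - xstar‖ ≤ ‖x - xstar‖ + ‖w‖ := by
    rw [hxo, add_sub_right_comm]
    exact norm_add_le _ _
  refine ⟨herr, ?_⟩
  rw [herr]
  exact (norm_mulVecE_le _ _).trans
    (mul_le_mul hstep hz (norm_nonneg _) ((norm_nonneg _).trans hstep))
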